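/- arXiv:1704.00716 — 3 statements merged into one kernel-verified Lean document; each statement's English description precedes it below -/
import Mathlib

section
/- For real p, q, r with p+r ≠ 0, p+q ≠ 0, q ≠ r, λ = p+q+r, and n ≥ 2, the sum Ψ₁ + Ψ₂ + Ψ₃ + Ψ₄ₐ + Ψ₄ᵦ, where Ψ₁ = r(λq²+r²q)λ^{2n-2}/(p+r) + λ^{n-2}(λq²+r²q)pq^n/(p+r), Ψ₂ = (λpq + q²r + pqr)λ^{2n-2}, Ψ₃ = λ^{n-2}r²q(λ^n - r^n), Ψ₄ₐ = λ^{n-2}qr⁴(λ^n - r^n)/((p+r)(p+q)) + λ^{n-2}pqr³(q^n - r^n)/((p+r)(q-r)), Ψ₄ᵦ = λ^{n-2}r^{n+1}pq, equals pq²(−pr+pq+q²)(qλ)^n/(λ²(p+r)(q−r)) + qr(−p²r+p²q+pq²−2pqr+r³−q²r)(rλ)^n/(λ²(p+q)(q−r)) + q(p³+p²q+2p²r+pr²+3pqr+r³+r²q+q²r)λ^{2n}/(λ(p+r)(p+q)). -/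
set_option maxHeartbeats 1000000 in
theorem preimage_density_one_closed_form (p q r l : ℝ) (hl : l = p + q + r)
    (hpr : p + r ≠ 0) (hpq : p + q ≠ 0) (hqr : q ≠ r) (hl0 : l ≠ 0)
    (n : ℕ) (hn : 2 ≤ n) :
    (r*(l*q^2 + r^2*q)*l^(2*n-2)/(p+r) + l^(n-2)*(l*q^2+r^2*q)*p*q^n/(p+r))
    + (l*p*q + q^2*r + p*q*r)*l^(2*n-2)
    + l^(n-2)*r^2*q*(l^n - r^n)
    + (l^(n-2)*q*r^4*(l^n - r^n)/((p+r)*(p+q))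
        + l^(n-2)*p*q*r^3*(q^n - r^n)/((p+r)*(q-r)))
    + l^(n-2)*r^(n+1)*p*q =
    p*q^2*(-p*r + p*q + q^2)*(q*l)^n/(l^2*(p+r)*(q-r))
    + q*r*(-p^2*r + p^2*q + p*q^2 - 2*p*q*r + r^3 - q^2*r)*(r*l)^n/(l^2*(p+q)*(q-r))
    + q*(p^3 + p^2*q + 2*p^2*r + p*r^2 + 3*p*q*r + r^3 + r^2*q + q^2*r)*l^(2*n)
        /(l*(p+r)*(p+q)) := by
  obtain ⟨k, rfl⟩ : ∃ k, n = k + 2 := ⟨n - 2, by omega⟩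
  have h1 : 2 * (k + 2) - 2 = 2 * k + 2 := by omega
  have h2 : k + 2 - 2 = k := by omega
  have h3 : 2 * (k + 2) = 2 * k + 4 := by omega
  have hqr' : q - r ≠ 0 := sub_ne_zero.mpr hqr
  have h4 : k + 2 + 1 = k + 3 := rfl
  rw [h1, h2, h3, h4]
  have e : ∀ x : ℝ, ∀ m : ℕ, x ^ (k + m) = x ^ k * x ^ m := fun x m => pow_add x k m
  have e2 : ∀ x : ℝ, x ^ (2 * k + 2) = (x ^ k) ^ 2 * x ^ 2 := by
    intro x; rw [pow_add, pow_mul']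
  have e4 : ∀ x : ℝ, x ^ (2 * k + 4) = (x ^ k) ^ 2 * x ^ 4 := by
    intro x; rw [pow_add, pow_mul']
  simp only [mul_pow, e, e2, e4]
  generalize l ^ k = A
  generalize q ^ k = B
  generalize r ^ k = C
  subst hl
  field_simp
  ring
end

section
/- Let F be the one-sided CA global map on configurations x : ℤ → {0,1,2} given by F(x)(i) = f(x(i-1), x(i), x(i+1)) with f the rule (f(a,b,c)=c if a=b>c else b). If x(i-1) = 0 and x(i) = 2 (or x(i-1) = 1 and x(i) = 2), then F^n(x)(i) = 2 for all n, and also F^n(x)(i-1) = x(i-1) for all n. -/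
/-- The local rule of the 3-state CA. -/
def localRule (x₁ x₂ x₃ : Fin 3) : Fin 3 := if x₁ = x₂ ∧ x₃ < x₂ then x₃ else x₂

/-- The global CA map on bi-infinite configurations. -/
def globalMap (x : ℤ → Fin 3) : ℤ → Fin 3 := fun i => localRule (x (i-1)) (x i) (x (i+1))

theorem blocking_words (x : ℤ → Fin 3) (i : ℤ)
    (h : (x (i-1) = 0 ∧ x i = 2) ∨ (x (i-1) = 1 ∧ x i = 2)) :
    ∀ n : ℕ, globalMap^[n] x i = 2 ∧ globalMap^[n] x (i-1) = x (i-1) := by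
  have hne : x (i-1) ≠ 2 := by rcases h with ⟨h1, _⟩ | ⟨h1, _⟩ <;> simp [h1]
  have h2 : x i = 2 := by rcases h with ⟨_, h2⟩ | ⟨_, h2⟩ <;> exact h2
  intro n
  induction n with
  | zero => simp [h2]
  | succ n ih =>
    obtain ⟨ihi, ihm⟩ := ih
    constructor
    · rw [Function.iterate_succ_apply', show globalMap (globalMap^[n] x) i = localRule (globalMap^[n] x (i-1)) (globalMap^[n] x i) (globalMap^[n] x (i+1)) from rfl, ihm, ihi]
      unfold localRule
      rw [if_neg]
      rintro ⟨ha, _⟩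
      exact hne ha
    · rw [Function.iterate_succ_apply', show globalMap (globalMap^[n] x) (i-1) = localRule (globalMap^[n] x (i-1-1)) (globalMap^[n] x (i-1)) (globalMap^[n] x (i-1+1)) from rfl, ihm, show i-1+1 = i by ring, ihi]
      unfold localRule
      rw [if_neg]
      rintro ⟨_, hb⟩
      rw [Fin.lt_def] at hb
      omega
end

section
/- For real p, q, r ≥ 0 with λ = p+q+r, the density polynomial of the n-step preimages of 2 under the 3-state CA rule equals (p+q)·r·λ^{2n-1} + λ^{n-1}·r^{n+2}, where the preimage set consists exactly of words ⋆^{n-1}02⋆^n, ⋆^{n-1}12⋆^n, and ⋆^{n-1}2^{n+2}. -/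
open Finset

lemma sum_pi_fixed (m : ℕ) (f : Fin 3 → ℝ) (T : Finset (Fin m)) (c : Fin m → Fin 3) :
    ∑ b ∈ Fintype.piFinset (fun i => if i ∈ T then {c i} else Finset.univ),
      ∏ i, f (b i)
    = (∏ i ∈ T, f (c i)) * (∑ j, f j) ^ (m - T.card) := by
  rw [← Finset.prod_univ_sum]
  rw [← Finset.prod_mul_prod_compl T]
  congr 1
  · exact Finset.prod_congr rfl fun i hi => by simp [hi]
  · rw [Finset.prod_congr rfl (g := fun _ => ∑ j, f j) fun i hi => by
      simp at hi; simp [hi], Finset.prod_const, Finset.card_compl, Fintype.card_fin]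

lemma weight_eq (m : ℕ) (p q r : ℝ) (b : Fin m → Fin 3) :
    p ^ (Finset.univ.filter (fun i => b i = 0)).card *
    q ^ (Finset.univ.filter (fun i => b i = 1)).card *
    r ^ (Finset.univ.filter (fun i => b i = 2)).card
    = ∏ i, ![p,q,r] (b i) := by
  rw [← Finset.prod_fiberwise univ b (fun i => ![p,q,r] (b i))]
  rw [Fin.prod_univ_three]
  congr 1
  · congr 1
    · rw [Finset.prod_congr rfl (g := fun _ => p) (fun i hi => by simp at hi; simp [hi]),
        Finset.prod_const]
    · rw [Finset.prod_congr rfl (g := fun _ => q) (fun i hi => by simp at hi; simp [hi]),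
        Finset.prod_const]
  · rw [Finset.prod_congr rfl (g := fun _ => r) (fun i hi => by simp at hi; simp [hi]),
      Finset.prod_const]

open Finset in
/-- The density polynomial of the set of `n`-step preimages of `2`, namely the words of
length `2n+1` of the forms `⋆^{n-1} 0 2 ⋆^n`, `⋆^{n-1} 1 2 ⋆^n`, `⋆^{n-1} 2^{n+2}`,
equals `(p+q) r λ^{2n-1} + λ^{n-1} r^{n+2}` where `λ = p+q+r`. -/
theorem density_polynomial_preimages_two (p q r : ℝ)
    (hp : 0 ≤ p) (hq : 0 ≤ q) (hr : 0 ≤ r) (n : ℕ) (hn : 1 ≤ n) :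
    ∑ b ∈ Finset.univ.filter (fun b : Fin (2*n+1) → Fin 3 =>
        (b ⟨n-1, by omega⟩ = 0 ∧ b ⟨n, by omega⟩ = 2) ∨
        (b ⟨n-1, by omega⟩ = 1 ∧ b ⟨n, by omega⟩ = 2) ∨
        (∀ i : Fin (2*n+1), n-1 ≤ i.val → b i = 2)),
      p ^ (Finset.univ.filter (fun i => b i = 0)).card *
      q ^ (Finset.univ.filter (fun i => b i = 1)).card *
      r ^ (Finset.univ.filter (fun i => b i = 2)).card =
    (p+q)*r*(p+q+r)^(2*n-1) + (p+q+r)^(n-1)*r^(n+2) := by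
  classical
  set m := 2*n+1 with hm
  set i₀ : Fin m := ⟨n-1, by omega⟩
  set i₁ : Fin m := ⟨n, by omega⟩
  have hne : i₀ ≠ i₁ := by simp [i₀, i₁, Fin.ext_iff]; omega
  set f : Fin 3 → ℝ := ![p,q,r] with hf
  -- rewrite summand
  rw [Finset.sum_congr rfl (fun b _ => weight_eq m p q r b)]
  -- the three piFinsets
  set TA : Finset (Fin m) := {i₀, i₁}
  set cA : Fin m → Fin 3 := fun i => if i = i₀ then 0 else 2
  set cB : Fin m → Fin 3 := fun i => if i = i₀ then 1 else 2
  set TC : Finset (Fin m) := Finset.univ.filter (fun i : Fin m => n-1 ≤ i.val)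
  set A := Fintype.piFinset (fun i => if i ∈ TA then {cA i} else (Finset.univ : Finset (Fin 3)))
  set B := Fintype.piFinset (fun i => if i ∈ TA then {cB i} else (Finset.univ : Finset (Fin 3)))
  set C := Fintype.piFinset (fun i => if i ∈ TC then {(2 : Fin 3)} else (Finset.univ : Finset (Fin 3)))
  have hA : ∀ b : Fin m → Fin 3, b ∈ A ↔ (b i₀ = 0 ∧ b i₁ = 2) := by
    intro b
    simp only [A, Fintype.mem_piFinset]
    constructor
    · intro h
      have h0 := h i₀; have h1 := h i₁
      simp [TA, cA, hne.symm] at h0 h1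
      exact ⟨h0, h1⟩
    · rintro ⟨h0, h1⟩ i
      by_cases hi : i ∈ TA
      · simp [TA, cA] at hi ⊢
        rcases hi with rfl | rfl
        · simp [h0]
        · simp [hne.symm, h1, cA]
      · simp [hi]
  have hB : ∀ b : Fin m → Fin 3, b ∈ B ↔ (b i₀ = 1 ∧ b i₁ = 2) := by
    intro b
    simp only [B, Fintype.mem_piFinset]
    constructor
    · intro h
      have h0 := h i₀; have h1 := h i₁
      simp [TA, cB, hne.symm] at h0 h1
      exact ⟨h0, h1⟩
    · rintro ⟨h0, h1⟩ i
      by_cases hi : i ∈ TA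
      · simp [TA, cB] at hi ⊢
        rcases hi with rfl | rfl
        · simp [h0]
        · simp [hne.symm, h1, cB]
      · simp [hi]
  have hC : ∀ b : Fin m → Fin 3, b ∈ C ↔ (∀ i : Fin m, n-1 ≤ i.val → b i = 2) := by
    intro b
    simp only [C, Fintype.mem_piFinset]
    constructor
    · intro h i hi
      have := h i
      rw [if_pos (by simp [TC]; omega)] at this
      simpa using this
    · intro h i
      by_cases hi : i ∈ TC
      · have hi' : n - 1 ≤ i.val := by simpa [TC] using hi
        rw [if_pos hi]
        simp [h i hi']
      · simp [hi]
  have hsplit : (Finset.univ.filter (fun b : Fin m → Fin 3 =>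
        (b i₀ = 0 ∧ b i₁ = 2) ∨ (b i₀ = 1 ∧ b i₁ = 2) ∨
        (∀ i : Fin m, n-1 ≤ i.val → b i = 2))) = (A ∪ B) ∪ C := by
    ext b
    simp [hA, hB, hC, or_assoc]
  rw [hsplit]
  have hABd : Disjoint A B := by
    rw [Finset.disjoint_left]
    intro b hb hb'
    rw [hA] at hb; rw [hB] at hb'
    rw [hb.1] at hb'; exact absurd hb'.1 (by decide)
  have hCd : Disjoint (A ∪ B) C := by
    rw [Finset.disjoint_left]
    intro b hb hb'
    rw [hC] at hb'
    have h2 : b i₀ = 2 := hb' i₀ (le_refl _)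
    simp [Finset.mem_union, hA, hB] at hb
    rcases hb with ⟨h,_⟩ | ⟨h,_⟩ <;> rw [h2] at h <;> exact absurd h (by decide)
  rw [Finset.sum_union hCd, Finset.sum_union hABd]
  have hTAcard : TA.card = 2 := by
    rw [Finset.card_insert_of_notMem (by simp [hne]), Finset.card_singleton]
  have hTC : TC = Finset.Ici i₀ := by
    ext i; simp [TC, Fin.le_def, i₀]
  have hTCcard : TC.card = n + 2 := by
    rw [hTC, Fin.card_Ici]; simp [i₀]; omega
  have hsumf : ∑ j, f j = p + q + r := by
    rw [Fin.sum_univ_three]; simp [f]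
  have eA := sum_pi_fixed m f TA cA
  have eB := sum_pi_fixed m f TA cB
  have eC := sum_pi_fixed m f TC (fun _ => 2)
  rw [eA, eB, eC, hsumf, hTAcard, hTCcard]
  have hprodA : ∏ i ∈ TA, f (cA i) = p * r := by
    rw [Finset.prod_insert (by simp [hne]), Finset.prod_singleton]
    simp [cA, hne.symm, f]
  have hprodB : ∏ i ∈ TA, f (cB i) = q * r := by
    rw [Finset.prod_insert (by simp [hne]), Finset.prod_singleton]
    simp [cB, hne.symm, f]
  have hprodC : ∏ i ∈ TC, f 2 = r ^ (n+2) := by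
    rw [Finset.prod_const, hTCcard]; simp [f]
  rw [hprodA, hprodB, hprodC]
  have h1 : m - 2 = 2*n - 1 := by omega
  have h2 : m - (n+2) = n - 1 := by omega
  rw [h1, h2]; ring
end
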